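/- Under the hypotheses of the previous statement (α_n = 1 - 2/(n+2), γ_n = (n+2)/(n+1), x_{n+1} = (1-α_n)u + α_n T_n(x_n), M ≥ max{d(x,p), d(u,p)}, and the condition d(T_n y, T_m y) ≤ (|γ_n - γ_m|/γ_n)·d(y, T_n y)), for all m, n: d(x_n, T_n(x_n)) ≤ 10M/(n+2) and d(x_n, T_m(x_n)) ≤ 20M/(n+2). -/

import Mathlib

/-!
Every point built by the iteration is a W-combination of points of the ball `B(p, M)`, and the
`T n` are nonexpansive and fix `p`, so the whole orbit stays in that ball and all distances that
occur are at most `2M`. Asymptotic regularity `d(xₙ, xₙ₊₁) ≤ 6M/(n+2)` then follows by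
induction: pass from `xₙ₊₁` to `xₙ₊₂` through `W(u, Tₙ xₙ, αₙ₊₁)`; axiom (W2) costs
`|αₙ - αₙ₊₁|·2M`, axiom (W4) costs `αₙ₊₁ d(Tₙ xₙ, Tₙ₊₁ xₙ₊₁)`, and the condition on `γ` bounds
the latter by `d(xₙ, xₙ₊₁) + 2M/(n+2)²`. Finally `d(xₙ, Tₙ xₙ) ≤ d(xₙ, xₙ₊₁) + (1 - αₙ)·2M`,
and since `|γₙ - γₘ| ≤ γₙ` the condition on `γ` at most doubles this bound for `Tₘ`.
-/

open Set

section WHyperbolic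

variable {X : Type*} [MetricSpace X] {W : X → X → ℝ → X}

theorem W_zero_eq (W1 : ∀ (x y z : X), ∀ l ∈ Icc (0:ℝ) 1,
      dist z (W x y l) ≤ (1 - l) * dist z x + l * dist z y) (x y : X) :
    W x y 0 = x := by
  have h := W1 x y x 0 ⟨le_rfl, zero_le_one⟩
  simp only [sub_zero, one_mul, dist_self, zero_mul, add_zero, dist_le_zero] at h
  exact h.symm

theorem dist_W_le_of_le (W1 : ∀ (x y z : X), ∀ l ∈ Icc (0:ℝ) 1,
      dist z (W x y l) ≤ (1 - l) * dist z x + l * dist z y)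
    {x y z : X} {l r : ℝ} (hl : l ∈ Icc (0:ℝ) 1) (hx : dist z x ≤ r) (hy : dist z y ≤ r) :
    dist z (W x y l) ≤ r :=
  calc dist z (W x y l) ≤ (1 - l) * dist z x + l * dist z y := W1 x y z l hl
    _ ≤ (1 - l) * r + l * r := by
        gcongr
        · linarith [hl.2]
        · exact hl.1
    _ = r := by ring

theorem dist_right_W_le (W1 : ∀ (x y z : X), ∀ l ∈ Icc (0:ℝ) 1,
      dist z (W x y l) ≤ (1 - l) * dist z x + l * dist z y)
    (x y : X) {l : ℝ} (hl : l ∈ Icc (0:ℝ) 1) :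
    dist y (W x y l) ≤ (1 - l) * dist y x := by
  simpa using W1 x y y l hl

theorem dist_W_W_le (W4 : ∀ (x y z w : X), ∀ l ∈ Icc (0:ℝ) 1,
      dist (W x z l) (W y w l) ≤ (1 - l) * dist x y + l * dist z w)
    (u y z : X) {l : ℝ} (hl : l ∈ Icc (0:ℝ) 1) :
    dist (W u y l) (W u z l) ≤ l * dist y z := by
  simpa using W4 u u y z l hl

end WHyperbolic

theorem one_sub_two_div_mem_Icc (n : ℕ) : 1 - 2 / ((n:ℝ) + 2) ∈ Icc (0:ℝ) 1 := by
  have h : 2 / ((n:ℝ) + 2) ≤ 1 := by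
    rw [div_le_one (by positivity)]
    linarith [n.cast_nonneg (α := ℝ)]
  exact ⟨by linarith, by linarith [show 0 ≤ 2 / ((n:ℝ) + 2) by positivity]⟩

theorem halpern_rate_step {t M : ℝ} (ht : 0 ≤ t) (hM : 0 ≤ M) :
    |(1 - 2 / (t + 2)) - (1 - 2 / (t + 3))| * (2 * M)
      + (1 - 2 / (t + 3)) * (6 * M / (t + 2) + 2 * M / (t + 2) ^ 2) ≤ 6 * M / (t + 3) := by
  have hdiff : (1 - 2 / (t + 3)) - (1 - 2 / (t + 2)) = 2 / ((t + 2) * (t + 3)) := by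
    field_simp; ring
  rw [abs_sub_comm, hdiff, abs_of_nonneg (by positivity)]
  have hgap : 6 * M / (t + 3) - (2 / ((t + 2) * (t + 3)) * (2 * M)
      + (1 - 2 / (t + 3)) * (6 * M / (t + 2) + 2 * M / (t + 2) ^ 2))
      = 2 * M / ((t + 2) ^ 2 * (t + 3)) := by
    field_simp; ring
  linarith [show 0 ≤ 2 * M / ((t + 2) ^ 2 * (t + 3)) by positivity]

theorem abs_add_two_div_add_one_sub_succ_div_eq (n : ℕ) :
    |((n:ℝ) + 2) / (n + 1) - (((n + 1 : ℕ) : ℝ) + 2) / ((n + 1 : ℕ) + 1)| / ((n + 2) / (n + 1))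
      = 1 / ((n:ℝ) + 2) ^ 2 := by
  push_cast
  have h : ((n:ℝ) + 2) / (n + 1) - (n + 1 + 2) / (n + 1 + 1) = 1 / ((n + 1) * (n + 2)) := by
    field_simp; ring
  rw [h, abs_of_nonneg (by positivity)]
  field_simp

theorem abs_sub_div_le_one {a b : ℝ} (ha : a ∈ Icc (1:ℝ) 2) (hb : b ∈ Icc (1:ℝ) 2) :
    |a - b| / a ≤ 1 := by
  rw [div_le_one (by linarith [ha.1]), abs_le]
  constructor <;> linarith [ha.1, ha.2, hb.1, hb.2]

theorem add_two_div_add_one_mem_Icc (n : ℕ) : ((n:ℝ) + 2) / (n + 1) ∈ Icc (1:ℝ) 2 := by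
  constructor
  · rw [le_div_iff₀ (by positivity)]; linarith
  · rw [div_le_iff₀ (by positivity)]; linarith [n.cast_nonneg (α := ℝ)]

section Halpern

variable {X : Type*} [MetricSpace X] {W : X → X → ℝ → X} {T : ℕ → X → X} {p u : X}
  {x : ℕ → X} {α : ℕ → ℝ}

theorem dist_apply_fixed_le (hT : ∀ n, ∀ (x y : X), dist (T n x) (T n y) ≤ dist x y)
    (hfix : ∀ n, T n p = p) (n : ℕ) (y : X) : dist (T n y) p ≤ dist y p := by
  simpa only [hfix n] using hT n y p

theorem dist_apply_le_two_mul (hT : ∀ n, ∀ (x y : X), dist (T n x) (T n y) ≤ dist x y)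
    (hfix : ∀ n, T n p = p) {y z : X} {M : ℝ} (hy : dist y p ≤ M) (hz : dist z p ≤ M)
    (n : ℕ) : dist z (T n y) ≤ 2 * M := by
  linarith [dist_triangle_right z (T n y) p, dist_apply_fixed_le hT hfix n y]

theorem dist_halpern_le (W1 : ∀ (x y z : X), ∀ l ∈ Icc (0:ℝ) 1,
      dist z (W x y l) ≤ (1 - l) * dist z x + l * dist z y)
    (hT : ∀ n, ∀ (x y : X), dist (T n x) (T n y) ≤ dist x y) (hfix : ∀ n, T n p = p)
    (hα : ∀ n, α n ∈ Icc (0:ℝ) 1) (hxrec : ∀ n, x (n + 1) = W u (T n (x n)) (α n))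
    {M : ℝ} (hx0 : dist (x 0) p ≤ M) (hu : dist u p ≤ M) (n : ℕ) : dist (x n) p ≤ M := by
  induction n with
  | zero => exact hx0
  | succ n ih =>
    rw [hxrec n, dist_comm]
    refine dist_W_le_of_le W1 (hα n) (by rwa [dist_comm]) ?_
    rw [dist_comm]
    exact (dist_apply_fixed_le hT hfix n (x n)).trans ih

theorem dist_halpern_succ_succ_le (W2 : ∀ (x y : X), ∀ l ∈ Icc (0:ℝ) 1, ∀ m ∈ Icc (0:ℝ) 1,
      dist (W x y l) (W x y m) = |l - m| * dist x y)
    (W4 : ∀ (x y z w : X), ∀ l ∈ Icc (0:ℝ) 1,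
      dist (W x z l) (W y w l) ≤ (1 - l) * dist x y + l * dist z w)
    (hα : ∀ n, α n ∈ Icc (0:ℝ) 1) (hxrec : ∀ n, x (n + 1) = W u (T n (x n)) (α n)) (n : ℕ) :
    dist (x (n + 1)) (x (n + 2)) ≤ |α n - α (n + 1)| * dist u (T n (x n))
      + α (n + 1) * dist (T n (x n)) (T (n + 1) (x (n + 1))) := by
  have h₁ : dist (x (n + 1)) (W u (T n (x n)) (α (n + 1)))
      ≤ |α n - α (n + 1)| * dist u (T n (x n)) := by
    rw [hxrec n]
    exact (W2 _ _ _ (hα n) _ (hα (n + 1))).le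
  have h₂ : dist (W u (T n (x n)) (α (n + 1))) (x (n + 2))
      ≤ α (n + 1) * dist (T n (x n)) (T (n + 1) (x (n + 1))) := by
    rw [hxrec (n + 1)]
    exact dist_W_W_le W4 _ _ _ (hα (n + 1))
  exact (dist_triangle _ _ _).trans (add_le_add h₁ h₂)

theorem dist_halpern_succ_le (W1 : ∀ (x y z : X), ∀ l ∈ Icc (0:ℝ) 1,
      dist z (W x y l) ≤ (1 - l) * dist z x + l * dist z y)
    (W2 : ∀ (x y : X), ∀ l ∈ Icc (0:ℝ) 1, ∀ m ∈ Icc (0:ℝ) 1,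
      dist (W x y l) (W x y m) = |l - m| * dist x y)
    (W4 : ∀ (x y z w : X), ∀ l ∈ Icc (0:ℝ) 1,
      dist (W x z l) (W y w l) ≤ (1 - l) * dist x y + l * dist z w)
    (hT : ∀ n, ∀ (x y : X), dist (T n x) (T n y) ≤ dist x y) (hfix : ∀ n, T n p = p)
    (hxrec : ∀ n, x (n + 1) = W u (T n (x n)) (α n)) (hα : ∀ n : ℕ, α n = 1 - 2 / (n + 2))
    (hTT : ∀ n (y : X), dist (T n y) (T (n + 1) y) ≤ dist y (T n y) / (n + 2) ^ 2)
    {M : ℝ} (hbound : ∀ n, dist (x n) p ≤ M) (hu : dist u p ≤ M) (n : ℕ) :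
    dist (x n) (x (n + 1)) ≤ 6 * M / (n + 2) := by
  have hM : 0 ≤ M := dist_nonneg.trans hu
  have hα01 : ∀ n, α n ∈ Icc (0:ℝ) 1 := fun n => hα n ▸ one_sub_two_div_mem_Icc n
  induction n with
  | zero =>
    have hx1 : x 1 = u := by
      rw [hxrec 0, hα 0, Nat.cast_zero, zero_add, div_self two_ne_zero, sub_self]
      exact W_zero_eq W1 _ _
    rw [hx1, Nat.cast_zero, zero_add]
    linarith [dist_triangle_right (x 0) u p, hbound 0]
  | succ n ih =>
    have hTx : dist (T n (x n)) (T (n + 1) (x (n + 1)))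
        ≤ 6 * M / (n + 2) + 2 * M / (n + 2) ^ 2 :=
      calc dist (T n (x n)) (T (n + 1) (x (n + 1)))
          ≤ dist (x n) (x (n + 1)) + dist (T n (x (n + 1))) (T (n + 1) (x (n + 1))) :=
            (dist_triangle _ _ _).trans (add_le_add_left (hT n _ _) _)
        _ ≤ 6 * M / (n + 2) + 2 * M / (n + 2) ^ 2 := by
            gcongr
            refine (hTT n _).trans ?_
            gcongr
            exact dist_apply_le_two_mul hT hfix (hbound (n + 1)) (hbound (n + 1)) n
    have hcast : ((n + 1 : ℕ) : ℝ) + 2 = n + 3 := by push_cast; ring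
    rw [hcast]
    calc dist (x (n + 1)) (x (n + 1 + 1))
        ≤ |α n - α (n + 1)| * dist u (T n (x n))
          + α (n + 1) * dist (T n (x n)) (T (n + 1) (x (n + 1))) :=
          dist_halpern_succ_succ_le W2 W4 hα01 hxrec n
      _ ≤ |α n - α (n + 1)| * (2 * M)
          + α (n + 1) * (6 * M / (n + 2) + 2 * M / (n + 2) ^ 2) :=
          add_le_add
            (mul_le_mul_of_nonneg_left (dist_apply_le_two_mul hT hfix (hbound n) hu n)
              (abs_nonneg _))
            (mul_le_mul_of_nonneg_left hTx (hα01 _).1)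
      _ ≤ 6 * M / (n + 3) := by
          rw [hα n, hα (n + 1), hcast]
          exact halpern_rate_step n.cast_nonneg hM

theorem dist_halpern_succ_apply_le (W1 : ∀ (x y z : X), ∀ l ∈ Icc (0:ℝ) 1,
      dist z (W x y l) ≤ (1 - l) * dist z x + l * dist z y)
    (hT : ∀ n, ∀ (x y : X), dist (T n x) (T n y) ≤ dist x y) (hfix : ∀ n, T n p = p)
    (hxrec : ∀ n, x (n + 1) = W u (T n (x n)) (α n)) (hα : ∀ n : ℕ, α n = 1 - 2 / (n + 2))
    {M : ℝ} (hbound : ∀ n, dist (x n) p ≤ M) (hu : dist u p ≤ M) (n : ℕ) :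
    dist (x (n + 1)) (T n (x n)) ≤ 4 * M / (n + 2) := by
  rw [hxrec n, dist_comm]
  calc dist (T n (x n)) (W u (T n (x n)) (α n))
      ≤ (1 - α n) * dist (T n (x n)) u :=
        dist_right_W_le W1 _ _ (hα n ▸ one_sub_two_div_mem_Icc n)
    _ ≤ 2 / (n + 2) * (2 * M) := by
        rw [hα n, sub_sub_cancel, dist_comm]
        gcongr
        exact dist_apply_le_two_mul hT hfix (hbound n) hu n
    _ = 4 * M / (n + 2) := by ring

end Halpern

theorem stmt17_general {X : Type*} [MetricSpace X] (W : X → X → ℝ → X)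
    (W1 : ∀ (x y z : X), ∀ l ∈ Set.Icc (0:ℝ) 1,
      dist z (W x y l) ≤ (1 - l) * dist z x + l * dist z y)
    (W2 : ∀ (x y : X), ∀ l ∈ Set.Icc (0:ℝ) 1, ∀ m ∈ Set.Icc (0:ℝ) 1,
      dist (W x y l) (W x y m) = |l - m| * dist x y)
    (W4 : ∀ (x y z w : X), ∀ l ∈ Set.Icc (0:ℝ) 1,
      dist (W x z l) (W y w l) ≤ (1 - l) * dist x y + l * dist z w)
    (T : ℕ → X → X)
    (hT : ∀ n, ∀ (x y : X), dist (T n x) (T n y) ≤ dist x y)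
    (p : X) (hfix : ∀ n, T n p = p)
    (u x₀ : X) (α : ℕ → ℝ)
    (x : ℕ → X) (hx0 : x 0 = x₀)
    (hxrec : ∀ n, x (n + 1) = W u (T n (x n)) (α n))
    (hα : ∀ n, α n = 1 - 2 / (n + 2))
    (γ : ℕ → ℝ) (hγ : ∀ n, γ n = (n + 2) / (n + 1))
    (hC1 : ∀ (y : X) (n m : ℕ), dist (T n y) (T m y) ≤ (|γ n - γ m| / γ n) * dist y (T n y))
    (M : ℝ) (hM1 : dist x₀ p ≤ M) (hM2 : dist u p ≤ M) :
    ∀ m n, dist (x n) (T n (x n)) ≤ 10 * M / (n + 2) ∧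
      dist (x n) (T m (x n)) ≤ 20 * M / (n + 2) := by
  have hbound := dist_halpern_le W1 hT hfix (fun n => hα n ▸ one_sub_two_div_mem_Icc n) hxrec
    (hx0 ▸ hM1) hM2
  have hTT : ∀ n (y : X), dist (T n y) (T (n + 1) y) ≤ dist y (T n y) / (n + 2) ^ 2 := by
    intro n y
    simpa only [hγ, abs_add_two_div_add_one_sub_succ_div_eq, one_div_mul_eq_div]
      using hC1 y n (n + 1)
  intro m n
  have hn : dist (x n) (T n (x n)) ≤ 10 * M / (n + 2) :=
    calc dist (x n) (T n (x n)) ≤ dist (x n) (x (n + 1)) + dist (x (n + 1)) (T n (x n)) :=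
          dist_triangle _ _ _
      _ ≤ 6 * M / (n + 2) + 4 * M / (n + 2) :=
          add_le_add (dist_halpern_succ_le W1 W2 W4 hT hfix hxrec hα hTT hbound hM2 n)
            (dist_halpern_succ_apply_le W1 hT hfix hxrec hα hbound hM2 n)
      _ = 10 * M / (n + 2) := by ring
  have hγle : |γ n - γ m| / γ n ≤ 1 := by
    rw [hγ, hγ]
    exact abs_sub_div_le_one (add_two_div_add_one_mem_Icc n) (add_two_div_add_one_mem_Icc m)
  refine ⟨hn, ?_⟩
  calc dist (x n) (T m (x n)) ≤ dist (x n) (T n (x n)) + dist (T n (x n)) (T m (x n)) :=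
        dist_triangle _ _ _
    _ ≤ dist (x n) (T n (x n)) + 1 * dist (x n) (T n (x n)) := by
        gcongr
        exact (hC1 (x n) n m).trans (by gcongr)
    _ ≤ 20 * M / (n + 2) := by linarith [show 20 * M / (n + 2) = 2 * (10 * M / (n + 2)) by ring]

theorem stmt17 {X : Type*} [MetricSpace X] (W : X → X → ℝ → X)
    (W1 : ∀ (x y z : X), ∀ l ∈ Set.Icc (0:ℝ) 1,
      dist z (W x y l) ≤ (1 - l) * dist z x + l * dist z y)
    (W2 : ∀ (x y : X), ∀ l ∈ Set.Icc (0:ℝ) 1, ∀ m ∈ Set.Icc (0:ℝ) 1,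
      dist (W x y l) (W x y m) = |l - m| * dist x y)
    (W3 : ∀ (x y : X), ∀ l ∈ Set.Icc (0:ℝ) 1, W x y l = W y x (1 - l))
    (W4 : ∀ (x y z w : X), ∀ l ∈ Set.Icc (0:ℝ) 1,
      dist (W x z l) (W y w l) ≤ (1 - l) * dist x y + l * dist z w)
    (T : ℕ → X → X)
    (hT : ∀ n, ∀ (x y : X), dist (T n x) (T n y) ≤ dist x y)
    (p : X) (hfix : ∀ n, T n p = p)
    (u x₀ : X) (α : ℕ → ℝ)
    (x : ℕ → X) (hx0 : x 0 = x₀)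
    (hxrec : ∀ n, x (n + 1) = W u (T n (x n)) (α n))
    (hα : ∀ n, α n = 1 - 2 / (n + 2))
    (γ : ℕ → ℝ) (hγ : ∀ n, γ n = (n + 2) / (n + 1))
    (hC1 : ∀ (y : X) (n m : ℕ), dist (T n y) (T m y) ≤ (|γ n - γ m| / γ n) * dist y (T n y))
    (M : ℝ) (hM : 0 < M) (hM1 : dist x₀ p ≤ M) (hM2 : dist u p ≤ M) :
    ∀ m n, dist (x n) (T n (x n)) ≤ 10 * M / (n + 2) ∧
      dist (x n) (T m (x n)) ≤ 20 * M / (n + 2) :=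
  stmt17_general W W1 W2 W4 T hT p hfix u x₀ α x hx0 hxrec hα γ hγ hC1 M hM1 hM2
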